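/- arXiv:1210.8230 — 2 statements merged into one kernel-verified Lean document; each statement's English description precedes it below -/
import Mathlib

section
/- Bihari-type uniqueness (special case): Let f, v : [0,T] → ℝ be continuous with v ≥ 0, and let κ : [0,∞) → [0,∞) be continuous, nondecreasing, with κ(x) > 0 for x > 0 and ∫_{0⁺} dx/κ(x) = ∞ (i.e., for every δ > 0 and M > 0 there is 0 < a < δ with ∫_a^δ dx/κ(x) > M). If f(t) ≥ 0 and f(t) ≤ ∫_0^t v(s)·κ(f(s)) ds for all t ∈ [0,T], then f(t) = 0 for all t ∈ [0,T]. -/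
/-!
Let `F t = ∫₀ᵗ v κ(f)`, so that `f ≤ F`, `F` is nondecreasing and `F' = v κ(f) ≤ v κ(F)`. If
`F t = ε > 0`, then for every `η ∈ (0, ε]` there is a time `c` with `F c = η`, and the substitution
`x = F s` on `[c, t]` gives `∫_η^ε dx / κ(x) ≤ ∫_c^t v ≤ ∫_0^T v`. These uniform bounds make `1 / κ`
integrable on `(0, ε]`, contradicting the Osgood condition. Hence `F`, and with it `f`, vanishes.
-/

open Set MeasureTheory intervalIntegral Filter

theorem monotoneOn_primitive_of_nonneg {w : ℝ → ℝ} {a b : ℝ} (hw : IntegrableOn w (Icc a b))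
    (hw0 : ∀ s ∈ Icc a b, 0 ≤ w s) : MonotoneOn (fun t => ∫ s in a..t, w s) (Icc a b) := by
  intro s hs t ht hst
  have hwi : ∀ u ∈ Icc a b, IntervalIntegrable w volume a u := fun u hu =>
    (hw.mono_set (uIcc_of_le hu.1 ▸ Icc_subset_Icc_right hu.2)).intervalIntegrable
  rw [← sub_nonneg, integral_interval_sub_left (hwi t ht) (hwi s hs)]
  exact integral_nonneg hst fun u hu => hw0 u ⟨hs.1.trans hu.1, hu.2.trans ht.2⟩

theorem hasDerivAt_primitive_of_continuousOn {w : ℝ → ℝ} {a b t : ℝ}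
    (hw : ContinuousOn w (Icc a b)) (ht : t ∈ Ioo a b) :
    HasDerivAt (fun u => ∫ s in a..u, w s) (w t) t :=
  integral_hasDerivAt_right
    ((hw.mono (Icc_subset_Icc_right ht.2.le)).intervalIntegrable_of_Icc ht.1.le)
    ((hw.mono Ioo_subset_Icc_self).stronglyMeasurableAtFilter isOpen_Ioo t ht)
    (hw.continuousAt (Icc_mem_nhds ht.1 ht.2))

theorem integral_one_div_le_integral_of_hasDerivAt_le {κ F w u : ℝ → ℝ} {a b : ℝ} (hab : a ≤ b)
    (hF : ContinuousOn F (Icc a b)) (hw : ContinuousOn w (Icc a b))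
    (hκ : ContinuousOn κ (F '' Icc a b)) (hFw : ∀ t ∈ Ioo a b, HasDerivAt F (w t) t)
    (hκF : ∀ t ∈ Icc a b, 0 < κ (F t)) (hwu : ∀ t ∈ Icc a b, w t ≤ u t * κ (F t))
    (hu : IntervalIntegrable u volume a b) :
    ∫ x in F a..F b, 1 / κ x ≤ ∫ t in a..b, u t := by
  have hκ_ne : ∀ x ∈ F '' Icc a b, κ x ≠ 0 := by
    rintro _ ⟨t, ht, rfl⟩
    exact (hκF t ht).ne'
  have hsubst := integral_comp_mul_deriv'' (g := fun x => 1 / κ x)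
    (by rwa [uIcc_of_le hab])
    (fun t ht => (hFw t (by rwa [min_eq_left hab, max_eq_right hab] at ht)).hasDerivWithinAt)
    (by rwa [uIcc_of_le hab]) (by rw [uIcc_of_le hab]; exact continuousOn_const.div hκ hκ_ne)
  rw [← hsubst]
  refine integral_mono_on hab (ContinuousOn.intervalIntegrable_of_Icc hab ?_) hu fun t ht => ?_
  · exact (continuousOn_const.div (hκ.comp hF (mapsTo_image F _))
      fun t ht => hκ_ne _ (mem_image_of_mem F ht)).mul hw
  · rw [Function.comp_apply, one_div_mul_eq_div, div_le_iff₀ (hκF t ht)]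
    exact hwu t ht

theorem integrableOn_Ioc_of_forall_intervalIntegral_le {g : ℝ → ℝ} {a b C : ℝ} (hab : a < b)
    (hg0 : ∀ x ∈ Ioc a b, 0 ≤ g x) (hgi : ∀ c ∈ Ioc a b, IntegrableOn g (Ioc c b))
    (hC : ∀ c ∈ Ioc a b, ∫ x in c..b, g x ≤ C) : IntegrableOn g (Ioc a b) := by
  set c : ℕ → ℝ := fun n => a + (b - a) * (1 / ((n : ℝ) + 1))
  have hc : ∀ n, c n ∈ Ioc a b := fun n => by
    have hn : 1 / ((n : ℝ) + 1) ∈ Ioc 0 1 :=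
      ⟨by positivity, div_le_one_of_le₀ (by simp) (by positivity)⟩
    constructor <;> nlinarith [hn.1, hn.2]
  have hc_lim : Tendsto c atTop (nhds a) := by
    simpa [c] using (tendsto_one_div_add_atTop_nhds_zero_nat.const_mul (b - a)).const_add a
  refine integrableOn_Ioc_of_intervalIntegral_norm_bounded_left (I := C) (fun n => hgi _ (hc n))
    hc_lim (Eventually.of_forall fun n => ?_)
  calc ∫ x in Ioc (c n) b, ‖g x‖ = ∫ x in c n..b, g x := by
        rw [integral_of_le (hc n).2]
        refine setIntegral_congr_fun measurableSet_Ioc fun x hx => Real.norm_of_nonneg ?_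
        exact hg0 x ⟨(hc n).1.trans hx.1, hx.2⟩
    _ ≤ C := hC _ (hc n)

theorem integral_one_div_le_of_le_integral {a b t η : ℝ} {f v κ : ℝ → ℝ}
    (hf : ContinuousOn f (Icc a b)) (hv : ContinuousOn v (Icc a b))
    (hv0 : ∀ s ∈ Icc a b, 0 ≤ v s) (hf0 : ∀ s ∈ Icc a b, 0 ≤ f s)
    (hκc : Continuous κ) (hκmono : MonotoneOn κ (Ici 0)) (hκ0 : 0 ≤ κ 0)
    (hκpos : ∀ x : ℝ, 0 < x → 0 < κ x)
    (hineq : ∀ s ∈ Icc a b, f s ≤ ∫ r in a..s, v r * κ (f r)) (ht : t ∈ Icc a b)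
    (hη : η ∈ Ioc 0 (∫ r in a..t, v r * κ (f r))) :
    ∫ x in η..∫ r in a..t, v r * κ (f r), 1 / κ x ≤ ∫ s in a..b, v s := by
  set F : ℝ → ℝ := fun s => ∫ r in a..s, v r * κ (f r)
  have hab : a ≤ b := ht.1.trans ht.2
  have hw : ContinuousOn (fun r => v r * κ (f r)) (Icc a b) := hv.mul (hκc.comp_continuousOn hf)
  have hF_mono : MonotoneOn F (Icc a b) :=
    monotoneOn_primitive_of_nonneg hw.integrableOn_Icc fun s hs =>
      mul_nonneg (hv0 s hs) (hκ0.trans (hκmono self_mem_Ici (hf0 s hs) (hf0 s hs)))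
  have hF_cont : ContinuousOn F (Icc a b) := by
    have := continuousOn_primitive_interval (μ := volume) (uIcc_of_le hab ▸ hw.integrableOn_Icc)
    rwa [uIcc_of_le hab] at this
  obtain ⟨c, hc, hFc⟩ : η ∈ F '' Icc a t :=
    intermediate_value_Icc ht.1 (hF_cont.mono (Icc_subset_Icc_right ht.2))
      ⟨by simpa [F] using hη.1.le, hη.2⟩
  have hct : Icc c t ⊆ Icc a b := Icc_subset_Icc hc.1 ht.2
  have hη_le : ∀ s ∈ Icc c t, η ≤ F s := fun s hs =>
    hFc ▸ hF_mono ⟨hc.1, hc.2.trans ht.2⟩ (hct hs) hs.1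
  calc ∫ x in η..F t, 1 / κ x = ∫ x in F c..F t, 1 / κ x := by rw [hFc]
    _ ≤ ∫ s in c..t, v s := by
      refine integral_one_div_le_integral_of_hasDerivAt_le hc.2 (hF_cont.mono hct) (hw.mono hct)
        hκc.continuousOn (fun s hs => hasDerivAt_primitive_of_continuousOn hw
          (Ioo_subset_Ioo hc.1 ht.2 hs))
        (fun s hs => hκpos _ (hη.1.trans_le (hη_le s hs))) (fun s hs => ?_)
        ((hv.mono hct).intervalIntegrable_of_Icc hc.2)
      have hFs : 0 ≤ F s := hη.1.le.trans (hη_le s hs)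
      exact mul_le_mul_of_nonneg_left (hκmono (hf0 s (hct hs)) hFs (hineq s (hct hs)))
        (hv0 s (hct hs))
    _ ≤ ∫ s in a..b, v s :=
      integral_mono_interval hc.1 hc.2 ht.2 ((ae_restrict_iff' measurableSet_Ioc).2 <|
        Eventually.of_forall fun s hs => hv0 s (Ioc_subset_Icc_self hs))
        (hv.intervalIntegrable_of_Icc hab)

theorem bihari_uniqueness_general (T : ℝ) (f v κ : ℝ → ℝ)
    (hf : ContinuousOn f (Set.Icc 0 T)) (hv : ContinuousOn v (Set.Icc 0 T))
    (hv0 : ∀ t ∈ Set.Icc (0 : ℝ) T, 0 ≤ v t)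
    (hf0 : ∀ t ∈ Set.Icc (0 : ℝ) T, 0 ≤ f t)
    (hκc : Continuous κ) (hκmono : MonotoneOn κ (Set.Ici 0))
    (hκ0 : κ 0 = 0) (hκpos : ∀ x : ℝ, 0 < x → 0 < κ x)
    (hκdiv : ∀ δ : ℝ, 0 < δ →
      ¬ MeasureTheory.IntegrableOn (fun x => 1 / κ x) (Set.Ioc 0 δ))
    (hineq : ∀ t ∈ Set.Icc (0 : ℝ) T, f t ≤ ∫ s in (0 : ℝ)..t, v s * κ (f s)) :
    ∀ t ∈ Set.Icc (0 : ℝ) T, f t = 0 := by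
  intro t ht
  by_contra hne
  have hε : 0 < ∫ s in (0 : ℝ)..t, v s * κ (f s) :=
    ((hf0 t ht).lt_of_ne' hne).trans_le (hineq t ht)
  refine hκdiv _ hε (integrableOn_Ioc_of_forall_intervalIntegral_le hε
    (fun x hx => one_div_nonneg.2 (hκpos x hx.1).le) (fun c hc => ?_)
    fun c hc =>
      integral_one_div_le_of_le_integral hf hv hv0 hf0 hκc hκmono hκ0.ge hκpos hineq ht hc)
  exact (continuousOn_const.div hκc.continuousOn fun x hx =>
    (hκpos x (hc.1.trans_le hx.1)).ne').integrableOn_Icc.mono_set Ioc_subset_Icc_self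

theorem bihari_uniqueness (T : ℝ) (hT : 0 < T) (f v κ : ℝ → ℝ)
    (hf : ContinuousOn f (Set.Icc 0 T)) (hv : ContinuousOn v (Set.Icc 0 T))
    (hv0 : ∀ t ∈ Set.Icc (0 : ℝ) T, 0 ≤ v t)
    (hf0 : ∀ t ∈ Set.Icc (0 : ℝ) T, 0 ≤ f t)
    (hκc : Continuous κ) (hκmono : MonotoneOn κ (Set.Ici 0))
    (hκ0 : κ 0 = 0) (hκpos : ∀ x : ℝ, 0 < x → 0 < κ x)
    (hκdiv : ∀ δ : ℝ, 0 < δ →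
      ¬ MeasureTheory.IntegrableOn (fun x => 1 / κ x) (Set.Ioc 0 δ))
    (hineq : ∀ t ∈ Set.Icc (0 : ℝ) T, f t ≤ ∫ s in (0 : ℝ)..t, v s * κ (f s)) :
    ∀ t ∈ Set.Icc (0 : ℝ) T, f t = 0 :=
  bihari_uniqueness_general T f v κ hf hv hv0 hf0 hκc hκmono hκ0 hκpos hκdiv hineq
end

section
/- Domination of fractional-power moduli by the logarithmic modulus: for every 0 < r < 1 and 0 < ε < e^{-r}, there exists 0 < ε₁ < e^{-1} (e.g. ε₁ = e^{r−2}) such that κ^{ε,r}(x) < κ^{ε₁,1}(x) for all x > 0, where κ^{ε,r} denotes κ(x) = x·(ln(1/x))^r on (0,ε] extended linearly with slope κ'(ε) beyond ε. -/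
noncomputable def kappaExt (ε r x : ℝ) : ℝ :=
  if x ≤ ε then x * (Real.log (1 / x)) ^ r
  else ε * (Real.log (1 / ε)) ^ r +
    ((Real.log (1 / ε)) ^ r - r * (Real.log (1 / ε)) ^ (r - 1)) * (x - ε)

/-!
The slope `log (1/ε) ^ r - r log (1/ε) ^ (r-1)` of `κ^{ε,r}` beyond `ε` is unbounded as `ε → 0`,
so `ε₁` has to depend on `ε`. Take `ε₁ = exp (-M)` with `M = log (1/ε) + 1 + 2/(1-r)`. Below `ε₁`,
`log (1/x) ≥ M > 1` gives `log (1/x) ^ r < log (1/x)`. Beyond `ε₁`, `κ^{ε₁,1}(x) = ε₁ + (M - 1) x`,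
while `κ^{ε,r}(x) ≤ M ^ r x`: on `(ε₁, ε]` because `log (1/x) ≤ M`, and beyond `ε` because
`κ^{ε,r}` lies below the line `x ↦ log (1/ε) ^ r x`. Bernoulli's inequality finishes the proof:
`M ^ r ≤ 1 + r (M - 1) ≤ M - 1`.
-/

open Real

theorem log_one_div_rpow_le_of_le {r δ t : ℝ} (hr : 0 ≤ r) (hδ : 0 < δ) (hδt : δ ≤ t)
    (ht : t ≤ 1) : log (1 / t) ^ r ≤ log (1 / δ) ^ r := by
  have ht₀ : 0 < t := hδ.trans_le hδt
  have hlog : 0 ≤ log (1 / t) := log_nonneg (one_le_one_div ht₀ ht)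
  gcongr

section KappaExt

variable {ε r x : ℝ}

theorem kappaExt_of_le (hx : x ≤ ε) : kappaExt ε r x = x * log (1 / x) ^ r := if_pos hx

theorem kappaExt_one_of_lt (hx : ε < x) : kappaExt ε 1 x = ε + (log (1 / ε) - 1) * x := by
  rw [kappaExt, if_neg hx.not_ge, sub_self, rpow_zero, rpow_one]
  ring

theorem kappaExt_le_mul_rpow_of_lt (hr : 0 ≤ r) (hε₀ : 0 < ε) (hε₁ : ε ≤ 1) (hx : ε < x) :
    kappaExt ε r x ≤ x * log (1 / ε) ^ r := by
  have hL : 0 ≤ log (1 / ε) := log_nonneg (one_le_one_div hε₀ hε₁)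
  have hslope : 0 ≤ r * log (1 / ε) ^ (r - 1) * (x - ε) := by
    have hLr := rpow_nonneg hL (r - 1)
    have hxε : 0 ≤ x - ε := sub_nonneg.mpr hx.le
    positivity
  rw [kappaExt, if_neg hx.not_ge]
  linarith

theorem kappaExt_le_mul_rpow_of_lt_of_le {δ : ℝ} (hr : 0 ≤ r) (hδ : 0 < δ) (hδε : δ ≤ ε)
    (hε : ε ≤ 1) (hx : δ < x) : kappaExt ε r x ≤ x * log (1 / δ) ^ r := by
  have hx₀ : 0 < x := hδ.trans hx
  rcases le_or_gt x ε with hxε | hεx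
  · rw [kappaExt_of_le hxε]
    exact mul_le_mul_of_nonneg_left
      (log_one_div_rpow_le_of_le hr hδ hx.le (hxε.trans hε)) hx₀.le
  · calc kappaExt ε r x ≤ x * log (1 / ε) ^ r :=
          kappaExt_le_mul_rpow_of_lt hr (hδ.trans_le hδε) hε hεx
      _ ≤ x * log (1 / δ) ^ r :=
          mul_le_mul_of_nonneg_left (log_one_div_rpow_le_of_le hr hδ hδε hε) hx₀.le

end KappaExt

theorem rpow_le_sub_one {r M : ℝ} (hr₀ : 0 ≤ r) (hr₁ : r < 1) (hM : 1 + 2 / (1 - r) ≤ M) :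
    M ^ r ≤ M - 1 := by
  have h1r : 0 < 1 - r := by linarith
  have hM₁ : 2 ≤ (1 - r) * (M - 1) := by
    rw [← le_sub_iff_add_le', div_le_iff₀' h1r] at hM
    exact hM
  calc M ^ r = (1 + (M - 1)) ^ r := by ring_nf
    _ ≤ 1 + r * (M - 1) := by
        apply rpow_one_add_le_one_add_mul_self _ hr₀ hr₁.le
        have : 0 ≤ 2 / (1 - r) := by positivity
        linarith
    _ ≤ M - 1 := by linarith

theorem kappaExt_lt_kappaExt_one {ε r δ x : ℝ} (hr₀ : 0 ≤ r) (hr₁ : r < 1) (hδ : 0 < δ)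
    (hδε : δ ≤ ε) (hε : ε ≤ 1) (hlog : 1 + 2 / (1 - r) ≤ log (1 / δ)) (hx : 0 < x) :
    kappaExt ε r x < kappaExt δ 1 x := by
  have hM : 1 < log (1 / δ) := by
    have : 0 < 2 / (1 - r) := div_pos two_pos (by linarith)
    linarith
  rcases le_or_gt x δ with hxδ | hδx
  · rw [kappaExt_of_le (hxδ.trans hδε), kappaExt_of_le hxδ, rpow_one]
    have hlogx : 1 < log (1 / x) :=
      hM.trans_le (log_le_log (by positivity) (one_div_le_one_div_of_le hx hxδ))
    gcongr
    simpa using rpow_lt_rpow_of_exponent_lt hlogx hr₁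
  · calc kappaExt ε r x ≤ x * log (1 / δ) ^ r :=
          kappaExt_le_mul_rpow_of_lt_of_le hr₀ hδ hδε hε hδx
      _ ≤ x * (log (1 / δ) - 1) := by gcongr; exact rpow_le_sub_one hr₀ hr₁ hlog
      _ < kappaExt δ 1 x := by rw [kappaExt_one_of_lt hδx]; linarith

theorem domination_by_log_modulus :
    ∀ r : ℝ, 0 < r → r < 1 → ∀ ε : ℝ, 0 < ε → ε < Real.exp (-r) →
      ∃ ε₁ : ℝ, 0 < ε₁ ∧ ε₁ < Real.exp (-1) ∧
        ∀ x : ℝ, 0 < x → kappaExt ε r x < kappaExt ε₁ 1 x := by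
  intro r hr₀ hr₁ ε hε₀ hεr
  have hε₁ : ε ≤ 1 := (hεr.trans (exp_lt_one_iff.mpr (by linarith))).le
  have hL : 0 ≤ log (1 / ε) := log_nonneg (one_le_one_div hε₀ hε₁)
  have hq : 0 < 2 / (1 - r) := div_pos two_pos (by linarith)
  set M := log (1 / ε) + 1 + 2 / (1 - r)
  have hlogM : log (1 / exp (-M)) = M := by rw [one_div, ← exp_neg, neg_neg, log_exp]
  have hMε : exp (-M) ≤ ε :=
    calc exp (-M) ≤ exp (-log (1 / ε)) := exp_le_exp.mpr (by linarith)
      _ = ε := by rw [one_div, log_inv, neg_neg, exp_log hε₀]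
  refine ⟨exp (-M), exp_pos _, exp_lt_exp.mpr (by linarith), fun x hx => ?_⟩
  exact kappaExt_lt_kappaExt_one hr₀.le hr₁ (exp_pos _) hMε hε₁ (by linarith) hx
end
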